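/- arXiv:2407.11264 — 3 statements merged into one kernel-verified Lean document; each statement's English description precedes it below -/
import Mathlib

section
/- Fix α > 0 and an integer k ≥ 2. The Shannon entropy of the k-th extreme Fréchet density φ_α^{(k)}(x) = (α/(k−1)!) x^{−αk−1} e^{−x^{−α}} for x > 0 (and 0 for x ≤ 0) equals h(φ_α^{(k)}) = −log(α/(k−1)!) − ((αk+1)/α)(Σ_{i=1}^{k-1} 1/i − γ) + k, where γ is the Euler–Mascheroni constant. -/
open MeasureTheory Filter Real Set

/-!
Substituting `t = x ^ (-α)` turns `φ` into the Gamma density `t ^ (k - 1) * exp (-t) / (k - 1)!`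
and `log φ` into `log (α / (k - 1)!) + ((α k + 1) / α) log t - t`, so the entropy reduces to the
Gamma moments `∫ t ^ n exp (-t) = n!` and `∫ t ^ n log t exp (-t) = Γ'(n + 1) = n! (H_n - γ)`.
-/

lemma abs_log_le_rpow_add_rpow_neg {x ε : ℝ} (hx : 0 < x) (hε : 0 < ε) :
    |log x| ≤ (x ^ ε + x ^ (-ε)) / ε := by
  have hpos : log x ≤ x ^ ε / ε := log_le_rpow_div hx.le hε
  have hneg : -log x ≤ x ^ (-ε) / ε := by
    simpa [log_inv, inv_rpow hx.le, rpow_neg hx.le] using log_le_rpow_div (inv_pos.2 hx).le hε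
  have : 0 ≤ x ^ ε / ε := by positivity
  have : 0 ≤ x ^ (-ε) / ε := by positivity
  rw [abs_le, add_div]
  constructor <;> linarith

lemma integrableOn_pow_mul_exp_neg (n : ℕ) :
    IntegrableOn (fun t : ℝ => t ^ n * exp (-t)) (Ioi 0) := by
  refine (GammaIntegral_convergent (s := n + 1) (by positivity)).congr_fun (fun t _ => ?_)
    measurableSet_Ioi
  simp [← rpow_natCast, mul_comm]

lemma integral_pow_mul_exp_neg (n : ℕ) : ∫ t in Ioi 0, t ^ n * exp (-t) = n.factorial := by
  rw [← Gamma_nat_eq_factorial, Gamma_eq_integral (by positivity)]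
  refine setIntegral_congr_fun measurableSet_Ioi fun t _ => ?_
  simp [← rpow_natCast, mul_comm]

lemma integrableOn_pow_mul_log_mul_exp_neg (n : ℕ) :
    IntegrableOn (fun t : ℝ => t ^ n * log t * exp (-t)) (Ioi 0) := by
  have hdom : IntegrableOn (fun t : ℝ =>
      2 * (exp (-t) * t ^ ((n + 3 / 2 : ℝ) - 1) + exp (-t) * t ^ ((n + 1 / 2 : ℝ) - 1)))
      (Ioi 0) :=
    ((GammaIntegral_convergent (by positivity)).add
      (GammaIntegral_convergent (by positivity))).const_mul 2
  refine hdom.mono' (by fun_prop) ?_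
  filter_upwards [ae_restrict_mem measurableSet_Ioi] with t (ht : 0 < t)
  have hlog := abs_log_le_rpow_add_rpow_neg ht (by norm_num : (0 : ℝ) < 1 / 2)
  have hsplit : ∀ r : ℝ, t ^ (n + r) = t ^ n * t ^ r := fun r => by
    rw [rpow_add ht, rpow_natCast]
  have e₁ : (n : ℝ) + 3 / 2 - 1 = n + 1 / 2 := by ring
  have e₂ : (n : ℝ) + 1 / 2 - 1 = n + -(1 / 2) := by ring
  rw [norm_mul, norm_mul, norm_of_nonneg (by positivity), norm_of_nonneg (exp_pos _).le,
    norm_eq_abs, e₁, e₂, hsplit, hsplit]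
  calc t ^ n * |log t| * exp (-t)
      ≤ t ^ n * ((t ^ (1 / 2 : ℝ) + t ^ (-(1 / 2) : ℝ)) / (1 / 2)) * exp (-t) := by gcongr
    _ = _ := by ring

lemma integral_pow_mul_log_mul_exp_neg (n : ℕ) :
    ∫ t in Ioi 0, t ^ n * log t * exp (-t) =
      n.factorial * (harmonic n - eulerMascheroniConstant) := by
  have hre : 0 < ((n : ℂ) + 1).re := by simp; positivity
  have hderiv : HasDerivAt Complex.Gamma
      (∫ t : ℝ in Ioi 0, (t : ℂ) ^ ((n : ℂ) + 1 - 1) * (log t * exp (-t)))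
      ((n : ℂ) + 1) := by
    refine (Complex.hasDerivAt_GammaIntegral hre).congr_of_eventuallyEq ?_
    filter_upwards [(isOpen_lt continuous_const Complex.continuous_re).mem_nhds hre]
      with s hs using Complex.Gamma_eq_integral hs
  have hvalue := hderiv.unique (Complex.hasDerivAt_Gamma_nat n)
  simp only [add_sub_cancel_right, Complex.cpow_natCast] at hvalue
  apply Complex.ofReal_injective
  rw [← integral_complex_ofReal]
  simp only [Complex.ofReal_mul, Complex.ofReal_pow, Complex.ofReal_sub, mul_assoc, hvalue]
  push_cast
  ring

lemma integral_pow_mul_exp_neg_mul_add_mul_log_sub (n : ℕ) (a b : ℝ) :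
    ∫ t in Ioi 0, t ^ n * exp (-t) * (a + b * log t - t) =
      n.factorial * (a + b * (harmonic n - eulerMascheroniConstant) - (n + 1)) := by
  have hsplit : ∀ t : ℝ, t ^ n * exp (-t) * (a + b * log t - t) =
      a * (t ^ n * exp (-t)) + b * (t ^ n * log t * exp (-t)) - t ^ (n + 1) * exp (-t) :=
    fun t => by ring
  simp only [hsplit]
  have hA := (integrableOn_pow_mul_exp_neg n).const_mul a
  have hB := (integrableOn_pow_mul_log_mul_exp_neg n).const_mul b
  rw [integral_sub (hA.fun_add hB) (integrableOn_pow_mul_exp_neg _), integral_add hA hB,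
    integral_const_mul, integral_const_mul, integral_pow_mul_exp_neg,
    integral_pow_mul_log_mul_exp_neg, integral_pow_mul_exp_neg, Nat.factorial_succ]
  push_cast
  ring

lemma rpow_neg_mul_add_one_sub_one {x : ℝ} (hx : 0 < x) (α : ℝ) (m : ℕ) :
    x ^ (-(α * (m + 1)) - 1) = x ^ (-α - 1) * (x ^ (-α)) ^ m := by
  rw [← rpow_natCast, ← rpow_mul hx.le, ← rpow_add hx]
  ring_nf

lemma log_mul_rpow_mul_exp_neg_rpow {x α c : ℝ} (hx : 0 < x) (hα : α ≠ 0) (hc : 0 < c)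
    (β : ℝ) :
    log (c * x ^ (-β - 1) * exp (-x ^ (-α))) =
      log c + (β + 1) / α * log (x ^ (-α)) - x ^ (-α) := by
  rw [log_mul (by positivity) (exp_pos _).ne', log_mul hc.ne' (by positivity), log_exp,
    log_rpow hx, log_rpow hx]
  field_simp
  ring

theorem entropy_kth_extreme_frechet_general (α : ℝ) (hα : 0 < α) (k : ℕ) (hk : 2 ≤ k)
    (φ : ℝ → ℝ)
    (hφ : ∀ x : ℝ, 0 < x →
      φ x = α / (k - 1).factorial * x ^ (-(α * k) - 1) * Real.exp (-(x ^ (-α)))) :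
    (- ∫ x in Set.Ioi (0 : ℝ), φ x * Real.log (φ x)) =
      - Real.log (α / (k - 1).factorial)
        - ((α * k + 1) / α) * ((∑ i ∈ Finset.Icc 1 (k - 1), (1 : ℝ) / i)
            - eulerMascheroniConstant)
        + k := by
  obtain ⟨m, rfl⟩ : ∃ m, k = m + 1 := ⟨k - 1, by omega⟩
  simp only [Nat.add_sub_cancel, Nat.cast_add, Nat.cast_one] at hφ ⊢
  set c := α / (m.factorial : ℝ)
  have hc : 0 < c := by positivity
  set g : ℝ → ℝ := fun t =>
    c / α * (t ^ m * exp (-t) * (log c + (α * (m + 1) + 1) / α * log t - t))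
  have hpt : EqOn (fun x => φ x * log (φ x)) (fun x => (|-α| * x ^ (-α - 1)) • g (x ^ (-α)))
      (Ioi 0) := by
    intro x (hx : 0 < x)
    dsimp only [g]
    rw [hφ x hx, log_mul_rpow_mul_exp_neg_rpow hx hα.ne' hc, rpow_neg_mul_add_one_sub_one hx,
      smul_eq_mul, abs_neg, abs_of_pos hα]
    field_simp
  have hharmonic : ∑ i ∈ Finset.Icc 1 m, (1 : ℝ) / i = harmonic m := by
    simp [harmonic_eq_sum_Icc]
  rw [setIntegral_congr_fun measurableSet_Ioi hpt,
    integral_comp_rpow_Ioi g (neg_ne_zero.2 hα.ne'), integral_const_mul,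
    integral_pow_mul_exp_neg_mul_add_mul_log_sub, hharmonic]
  simp only [c]
  field_simp
  ring

/-- Shannon entropy of the k-th extreme Fréchet density
`φ_α^{(k)}(x) = (α/(k-1)!) x^{-αk-1} e^{-x^{-α}}` for `x > 0`. -/
theorem entropy_kth_extreme_frechet (α : ℝ) (hα : 0 < α) (k : ℕ) (hk : 2 ≤ k)
    (φ : ℝ → ℝ)
    (hφ : ∀ x : ℝ, 0 < x →
      φ x = α / (k - 1).factorial * x ^ (-(α * k) - 1) * Real.exp (-(x ^ (-α))))
    (hφ0 : ∀ x : ℝ, x ≤ 0 → φ x = 0) :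
    (- ∫ x in Set.Ioi (0 : ℝ), φ x * Real.log (φ x)) =
      - Real.log (α / (k - 1).factorial)
        - ((α * k + 1) / α) * ((∑ i ∈ Finset.Icc 1 (k - 1), (1 : ℝ) / i)
            - eulerMascheroniConstant)
        + k :=
  entropy_kth_extreme_frechet_general α hα k hk φ hφ
end

section
/- Fix α > 0 and an integer k ≥ 2. The Shannon entropy of the k-th extreme Weibull density ψ_α^{(k)}(x) = (α/(k−1)!) (−x)^{αk−1} e^{−(−x)^{α}} for x < 0 (and 0 for x ≥ 0) equals h(ψ_α^{(k)}) = −log(α/(k−1)!) − ((αk−1)/α)(Σ_{i=1}^{k-1} 1/i − γ) + k, where γ is the Euler–Mascheroni constant. -/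
/-!
On `x < 0` put `t = (-x) ^ α`. Then `ψ log ψ dx` becomes the Gamma(k) density
`t ^ (k - 1) e^{-t} dt / (k - 1)!` times `log (α / (k - 1)!) + ((α k - 1) / α) log t - t`,
so the entropy is a combination of `Γ(k)`, `Γ'(k)` and `Γ(k + 1)`, where `Γ'(k)` is the integral
of `t ^ (k - 1) e^{-t} log t` and equals `(k - 1)! (H_{k-1} - γ)`.
-/

open MeasureTheory Filter Real Set

namespace Real

lemma integrableOn_exp_neg_mul_rpow_mul_log {s : ℝ} (hs : 1 < s) :
    IntegrableOn (fun t => exp (-t) * t ^ (s - 1) * log t) (Ioi 0) := by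
  refine ((GammaIntegral_convergent (by linarith : 0 < s + 1)).add
    (GammaIntegral_convergent (by linarith : 0 < s - 1))).mono'
    (by fun_prop : Measurable fun t => exp (-t) * t ^ (s - 1) * log t).aestronglyMeasurable ?_
  filter_upwards [self_mem_ae_restrict measurableSet_Ioi] with t (ht : 0 < t)
  have habs_log : |log t| ≤ t + t⁻¹ := abs_le.mpr
    ⟨by linarith [one_sub_inv_le_log_of_pos ht, inv_pos.mpr ht],
      by linarith [log_le_sub_one_of_pos ht, inv_pos.mpr ht]⟩
  calc ‖exp (-t) * t ^ (s - 1) * log t‖ = exp (-t) * t ^ (s - 1) * |log t| := by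
        rw [norm_mul, norm_mul, norm_of_nonneg (exp_pos _).le,
          norm_of_nonneg (rpow_nonneg ht.le _), norm_eq_abs]
    _ ≤ exp (-t) * t ^ (s - 1) * (t + t⁻¹) := by gcongr
    _ = exp (-t) * t ^ (s + 1 - 1) + exp (-t) * t ^ (s - 1 - 1) := by
        rw [show s + 1 - 1 = s - 1 + 1 by ring, rpow_add_one ht.ne', sub_eq_add_neg (s - 1),
          rpow_add ht, rpow_neg_one]
        ring

lemma hasDerivAt_Gamma_eq_integral {s : ℝ} (hs : 0 < s) :
    HasDerivAt Gamma (∫ t in Ioi 0, exp (-t) * t ^ (s - 1) * log t) s := by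
  have hcomplex := Complex.hasDerivAt_GammaIntegral (s := s) (by simpa using hs)
  have hcast : ∫ t : ℝ in Ioi 0, (t : ℂ) ^ ((s : ℂ) - 1) * (log t * exp (-t))
      = ((∫ t in Ioi 0, exp (-t) * t ^ (s - 1) * log t : ℝ) : ℂ) := by
    rw [← integral_complex_ofReal]
    refine setIntegral_congr_fun measurableSet_Ioi fun t (ht : 0 < t) => ?_
    push_cast
    rw [Complex.ofReal_cpow ht.le]
    push_cast
    ring
  rw [hcast] at hcomplex
  refine (Complex.ofReal_re _ ▸ hcomplex.real_of_complex).congr_of_eventuallyEq ?_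
  filter_upwards [eventually_gt_nhds hs] with x hx
  rw [Gamma_eq_integral hx, Complex.GammaIntegral_ofReal, Complex.ofReal_re]

lemma integral_exp_neg_mul_rpow_mul_affine_log {s : ℝ} (hs : 1 < s) (a b : ℝ) :
    ∫ t in Ioi 0, exp (-t) * t ^ (s - 1) * (a + b * log t - t) =
      a * Gamma s + b * deriv Gamma s - Gamma (s + 1) := by
  have hs0 : 0 < s := by linarith
  have hsplit : EqOn (fun t => exp (-t) * t ^ (s - 1) * (a + b * log t - t))
      (fun t => a * (exp (-t) * t ^ (s - 1)) + b * (exp (-t) * t ^ (s - 1) * log t)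
        - exp (-t) * t ^ (s + 1 - 1)) (Ioi 0) := fun t (ht : 0 < t) => by
    beta_reduce
    rw [show s + 1 - 1 = s - 1 + 1 by ring, rpow_add_one ht.ne']
    ring
  have hGamma := (GammaIntegral_convergent hs0).const_mul a
  have hlog := (integrableOn_exp_neg_mul_rpow_mul_log hs).const_mul b
  rw [setIntegral_congr_fun measurableSet_Ioi hsplit,
    integral_sub (f := fun t => a * (exp (-t) * t ^ (s - 1)) + b * (exp (-t) * t ^ (s - 1) * log t))
      (hGamma.add hlog) (GammaIntegral_convergent (by linarith)),
    integral_add hGamma hlog, integral_const_mul, integral_const_mul, ← Gamma_eq_integral hs0,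
    ← Gamma_eq_integral (by linarith), (hasDerivAt_Gamma_eq_integral hs0).deriv]

lemma integral_exp_neg_mul_rpow_natCast_mul_affine_log {n : ℕ} (hn : 0 < n) (a b : ℝ) :
    ∫ t in Ioi 0, exp (-t) * t ^ (n : ℝ) * (a + b * log t - t) =
      n.factorial * (a + b * (harmonic n - eulerMascheroniConstant) - (n + 1)) := by
  have h := integral_exp_neg_mul_rpow_mul_affine_log (s := n + 1) (by simp [hn]) a b
  rw [add_sub_cancel_right, deriv_Gamma_nat, Gamma_nat_eq_factorial,
    show (n : ℝ) + 1 + 1 = ((n + 1 : ℕ) : ℝ) + 1 by push_cast; ring,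
    Gamma_nat_eq_factorial, Nat.factorial_succ] at h
  rw [h]
  push_cast
  ring

end Real

lemma integral_Iio_rpow_neg_mul_comp_rpow_neg {α : ℝ} (hα : 0 < α) (g : ℝ → ℝ) :
    ∫ x in Iio 0, (-x) ^ (α - 1) * g ((-x) ^ α) = α⁻¹ * ∫ t in Ioi 0, g t := by
  rw [← integral_Iic_eq_integral_Iio,
    integral_comp_neg_Iic 0 (fun y => y ^ (α - 1) * g (y ^ α)), neg_zero,
    ← integral_comp_rpow_Ioi_of_pos hα (g := g)]
  simp only [smul_eq_mul, mul_assoc, integral_const_mul]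
  field_simp

lemma mul_log_of_rpow_mul_exp_neg_rpow {α c y : ℝ} (r : ℝ) (hα : α ≠ 0) (hc : c ≠ 0)
    (hy : 0 < y) :
    c * y ^ (α * (r + 1) - 1) * exp (-y ^ α) * log (c * y ^ (α * (r + 1) - 1) * exp (-y ^ α)) =
      y ^ (α - 1) * (c * (exp (-y ^ α) * (y ^ α) ^ r *
        (log c + (α * (r + 1) - 1) / α * log (y ^ α) - y ^ α))) := by
  rw [log_mul (by positivity) (exp_pos _).ne', log_mul hc (rpow_pos_of_pos hy _).ne',
    log_exp, log_rpow hy, log_rpow hy, ← rpow_mul hy.le,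
    show α * (r + 1) - 1 = α - 1 + α * r by ring, rpow_add hy]
  field_simp
  ring

theorem entropy_kth_extreme_weibull_general (α : ℝ) (hα : 0 < α) (k : ℕ) (hk : 2 ≤ k)
    (ψ : ℝ → ℝ)
    (hψ : ∀ x : ℝ, x < 0 →
      ψ x = α / (k - 1).factorial * (-x) ^ (α * k - 1) * Real.exp (-((-x) ^ α))) :
    (- ∫ x in Set.Iio (0 : ℝ), ψ x * Real.log (ψ x)) =
      - Real.log (α / (k - 1).factorial)
        - ((α * k - 1) / α) * ((∑ i ∈ Finset.Icc 1 (k - 1), (1 : ℝ) / i)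
            - eulerMascheroniConstant)
        + k := by
  obtain ⟨n, rfl⟩ : ∃ n, k = n + 1 := ⟨k - 1, by omega⟩
  simp only [Nat.add_sub_cancel] at hψ ⊢
  push_cast at hψ ⊢
  set c := α / n.factorial
  have hc : c ≠ 0 := by positivity
  have hc_factorial : c * n.factorial = α := div_mul_cancel₀ α (by positivity)
  have hpointwise : EqOn (fun x => ψ x * log (ψ x)) (fun x => (-x) ^ (α - 1) *
      (c * (exp (-(-x) ^ α) * ((-x) ^ α) ^ (n : ℝ) *
        (log c + (α * (n + 1) - 1) / α * log ((-x) ^ α) - (-x) ^ α)))) (Iio 0) :=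
    fun x (hx : x < 0) => by
      simp only [hψ x hx]
      exact mul_log_of_rpow_mul_exp_neg_rpow n hα.ne' hc (neg_pos.mpr hx)
  rw [setIntegral_congr_fun measurableSet_Iio hpointwise,
    integral_Iio_rpow_neg_mul_comp_rpow_neg hα (fun t => c * (exp (-t) * t ^ (n : ℝ) *
      (log c + (α * (n + 1) - 1) / α * log t - t))),
    integral_const_mul, integral_exp_neg_mul_rpow_natCast_mul_affine_log (by omega), ← mul_assoc c,
    hc_factorial, inv_mul_cancel_left₀ hα.ne', harmonic_eq_sum_Icc]
  push_cast
  simp only [one_div]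
  ring

/-- Shannon entropy of the k-th extreme Weibull density
`ψ_α^{(k)}(x) = (α/(k-1)!) (-x)^{αk-1} e^{-(-x)^α}` for `x < 0`. -/
theorem entropy_kth_extreme_weibull (α : ℝ) (hα : 0 < α) (k : ℕ) (hk : 2 ≤ k)
    (ψ : ℝ → ℝ)
    (hψ : ∀ x : ℝ, x < 0 →
      ψ x = α / (k - 1).factorial * (-x) ^ (α * k - 1) * Real.exp (-((-x) ^ α)))
    (hψ0 : ∀ x : ℝ, 0 ≤ x → ψ x = 0) :
    (- ∫ x in Set.Iio (0 : ℝ), ψ x * Real.log (ψ x)) =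
      - Real.log (α / (k - 1).factorial)
        - ((α * k - 1) / α) * ((∑ i ∈ Finset.Icc 1 (k - 1), (1 : ℝ) / i)
            - eulerMascheroniConstant)
        + k :=
  entropy_kth_extreme_weibull_general α hα k hk ψ hψ
end

section
/- Fix α > 0 and an integer k ≥ 2. Then ∫_0^∞ log( Φ_α(x) · x^{−α(k−1)} ) φ_α^{(k)}(x) dx = −k − (k−1)( γ − Σ_{i=1}^{k-1} 1/i ), where Φ_α(x) = exp(−x^{−α}) and φ_α^{(k)}(x) = (α/(k−1)!) x^{−αk−1} e^{−x^{−α}} for x > 0, and γ is the Euler–Mascheroni constant. -/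
open MeasureTheory Filter Real Set Asymptotics Topology

/-!
Substituting `t = x ^ (-α)` turns `φ_α^{(k)}(x) dx` into the Gamma(k) density
`t ^ (k-1) e^{-t} / (k-1)! dt` and the logarithm into `-t + (k-1) log t`. The first term
integrates to `-k` by the Gamma integral, and the second is `(k-1)/(k-1)!` times
`Γ'(k) = (k-1)! (H_{k-1} - γ)`, obtained by differentiating the Gamma integral under the
integral sign.
-/

theorem integrableOn_rpow_mul_log_mul_exp_neg {s : ℝ} (hs : 0 < s) :
    IntegrableOn (fun t : ℝ => t ^ (s - 1) * (log t * exp (-t))) (Ioi 0) := by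
  have hexp : Continuous fun t : ℝ => ((exp (-t) : ℝ) : ℂ) := by fun_prop
  -- `exp (-t)` decays at `∞` and is bounded at `0`, so its log-weighted Mellin transform
  -- converges
  have hmellin := (mellin_hasDerivAt_of_isBigO_rpow (E := ℂ) (s := s)
    (hexp.continuousOn.locallyIntegrableOn measurableSet_Ioi) ?_ (lt_add_one _) ?_
    (by simpa using hs)).1
  · refine IntegrableOn.congr_fun hmellin.re (fun t (ht : 0 < t) => ?_) measurableSet_Ioi
    have hcpow : (t : ℂ) ^ ((s : ℂ) - 1) = ((t ^ (s - 1) : ℝ) : ℂ) := by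
      rw [Complex.ofReal_cpow ht.le]; push_cast; rfl
    simp only [hcpow, smul_eq_mul, Complex.real_smul, ← Complex.ofReal_mul]
    exact Complex.ofReal_re _
  · rw [← isBigO_norm_left]
    simp_rw [Complex.norm_real, isBigO_norm_left]
    simpa only [neg_one_mul] using (isLittleO_exp_neg_mul_rpow_atTop zero_lt_one _).isBigO
  · simpa using (hexp.continuousWithinAt (s := Ioi 0) (x := 0)).tendsto.isBigO_one ℝ

theorem hasDerivAt_Gamma_eq_integral_rpow_mul_log_mul_exp_neg {s : ℝ} (hs : 0 < s) :
    HasDerivAt Gamma (∫ t in Ioi 0, t ^ (s - 1) * (log t * exp (-t))) s := by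
  have hs' : 0 < (s : ℂ).re := by simpa using hs
  have hGamma : Complex.Gamma =ᶠ[𝓝 (s : ℂ)] Complex.GammaIntegral := by
    filter_upwards [Complex.continuous_re.isOpen_preimage _ isOpen_Ioi |>.mem_nhds hs']
      with z hz using Complex.Gamma_eq_integral hz
  have hcomplex := (Complex.hasDerivAt_GammaIntegral hs').congr_of_eventuallyEq hGamma
  have hintegral : ∫ t : ℝ in Ioi 0, (t : ℂ) ^ ((s : ℂ) - 1) * (log t * exp (-t))
      = ((∫ t in Ioi 0, t ^ (s - 1) * (log t * exp (-t)) : ℝ) : ℂ) := by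
    rw [← integral_complex_ofReal]
    refine setIntegral_congr_fun measurableSet_Ioi fun t (ht : 0 < t) => ?_
    rw [Complex.ofReal_mul, Complex.ofReal_cpow ht.le]
    push_cast; rfl
  rw [hintegral] at hcomplex
  simpa [Complex.Gamma_ofReal] using hcomplex.real_of_complex

theorem integral_rpow_natCast_mul_log_mul_exp_neg (n : ℕ) :
    ∫ t in Ioi 0, t ^ (n : ℝ) * (log t * exp (-t)) =
      n.factorial * (harmonic n - eulerMascheroniConstant) := by
  have h := hasDerivAt_Gamma_eq_integral_rpow_mul_log_mul_exp_neg (n.cast_add_one_pos (α := ℝ))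
  rw [add_sub_cancel_right] at h
  rw [h.unique (hasDerivAt_Gamma_nat n)]
  ring

theorem integral_log_exp_neg_mul_rpow_mul_gamma_density (n : ℕ) :
    ∫ t in Ioi 0, log (exp (-t) * t ^ (n : ℝ)) * (t ^ (n : ℝ) * exp (-t) / n.factorial) =
      -(n + 1) + n * (harmonic n - eulerMascheroniConstant) := by
  have hs : (0 : ℝ) < n + 2 := by positivity
  have hlog := integrableOn_rpow_mul_log_mul_exp_neg (n.cast_add_one_pos (α := ℝ))
  rw [add_sub_cancel_right] at hlog
  have hGamma : ∫ t in Ioi 0, exp (-t) * t ^ ((n : ℝ) + 2 - 1) = (n + 1) * n.factorial := by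
    rw [← Real.Gamma_eq_integral hs, show (n : ℝ) + 2 = (n + 1 : ℕ) + 1 by push_cast; ring,
      Real.Gamma_nat_eq_factorial, Nat.factorial_succ]
    push_cast; ring
  calc _ = ∫ t in Ioi 0, n / n.factorial * (t ^ (n : ℝ) * (log t * exp (-t))) -
          (n.factorial : ℝ)⁻¹ * (exp (-t) * t ^ ((n : ℝ) + 2 - 1)) := by
        refine setIntegral_congr_fun measurableSet_Ioi fun t (ht : 0 < t) => ?_
        rw [log_mul (exp_ne_zero _) (rpow_pos_of_pos ht _).ne', log_exp, log_rpow ht,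
          show (n : ℝ) + 2 - 1 = n + 1 by ring, rpow_add_one ht.ne']
        ring
    _ = _ := by
      rw [integral_sub (hlog.const_mul _) ((GammaIntegral_convergent hs).const_mul _),
        integral_const_mul, integral_const_mul, integral_rpow_natCast_mul_log_mul_exp_neg, hGamma]
      field_simp
      ring

theorem frechet_log_integrand_eq_comp_rpow {α x : ℝ} (hα : 0 < α) (hx : 0 < x) (n : ℕ) :
    log (exp (-(x ^ (-α))) * x ^ (-(α * n))) *
        (α / n.factorial * x ^ (-(α * (n + 1)) - 1) * exp (-(x ^ (-α)))) =
      (|-α| * x ^ (-α - 1)) • (log (exp (-(x ^ (-α))) * (x ^ (-α)) ^ (n : ℝ)) *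
        ((x ^ (-α)) ^ (n : ℝ) * exp (-(x ^ (-α))) / n.factorial)) := by
  have hpow : (x ^ (-α)) ^ (n : ℝ) = x ^ (-(α * n)) := by
    rw [← rpow_mul hx.le, neg_mul]
  have hexponent : x ^ (-(α * (n + 1)) - 1) = x ^ (-α - 1) * x ^ (-(α * n)) := by
    rw [← rpow_add hx]; ring_nf
  rw [hpow, hexponent, abs_neg, abs_of_pos hα, smul_eq_mul]
  ring

/-- `∫_0^∞ log(Φ_α(x) x^{-α(k-1)}) φ_α^{(k)}(x) dx
= -k - (k-1)(γ - Σ_{i=1}^{k-1} 1/i)`. -/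
theorem integral_log_frechet_kth_extreme (α : ℝ) (hα : 0 < α) (k : ℕ) (hk : 2 ≤ k) :
    ∫ x in Set.Ioi (0 : ℝ),
        Real.log (Real.exp (-(x ^ (-α))) * x ^ (-(α * ((k : ℝ) - 1)))) *
          (α / (k - 1).factorial * x ^ (-(α * k) - 1) * Real.exp (-(x ^ (-α)))) =
      - (k : ℝ) - ((k : ℝ) - 1) *
        (eulerMascheroniConstant - ∑ i ∈ Finset.Icc 1 (k - 1), (1 : ℝ) / i) := by
  obtain ⟨n, rfl⟩ : ∃ n, k = n + 1 := ⟨k - 1, by omega⟩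
  simp only [Nat.add_sub_cancel, Nat.cast_add, Nat.cast_one, add_sub_cancel_right]
  rw [setIntegral_congr_fun measurableSet_Ioi
      fun x (hx : 0 < x) => frechet_log_integrand_eq_comp_rpow hα hx n,
    integral_comp_rpow_Ioi (fun t => log (exp (-t) * t ^ (n : ℝ)) *
      (t ^ (n : ℝ) * exp (-t) / n.factorial)) (neg_ne_zero.mpr hα.ne'),
    integral_log_exp_neg_mul_rpow_mul_gamma_density, harmonic_eq_sum_Icc]
  push_cast
  simp only [one_div]
  ring
end
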